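/- arXiv:2005.06503 — 4 statements merged into one kernel-verified Lean document; each statement's English description precedes it below -/
import Mathlib

section
/- For every Δ0 formula φ(x̄) over the nested relational type system (built from equality of Ur-elements, boolean connectives, and bounded quantifiers ∃x∈t, ∀x∈t), there exists an NRC expression Verify_φ(x̄) of output type Bool = Set(Unit) such that for every assignment of the free variables x̄ to objects of the appropriate types, Verify_φ(x̄) evaluates to the singleton {()} if and only if φ(x̄) holds, and to ∅ otherwise. -/
/-- Nested relational types. -/
inductive NType : Type
  | U : NType
  | unit : NType
  | prod : NType → NType → NType
  | set : NType → NType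

/-- Objects of a nested relational type over a set `α` of Ur-elements. -/
def Obj (α : Type) : NType → Type
  | .U => α
  | .unit => Unit
  | .prod a b => Obj α a × Obj α b
  | .set t => Set (Obj α t)

/-- Typed de Bruijn variables over a context of types. -/
inductive Var : List NType → NType → Type
  | zero {Γ t} : Var (t :: Γ) t
  | succ {Γ s t} : Var Γ t → Var (s :: Γ) t

/-- Environments: assignments of objects to all variables of a context. -/
def Env (α : Type) (Γ : List NType) : Type := ∀ t, Var Γ t → Obj α t

def Env.nil {α : Type} : Env α [] := fun _ v => nomatch v

def Env.cons {α : Type} {Γ : List NType} {t : NType} (x : Obj α t) (ρ : Env α Γ) :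
    Env α (t :: Γ) := fun s v =>
  match v with
  | .zero => x
  | .succ w => ρ s w

/-- Terms: variables, unit, tupling and projections. -/
inductive Tm : List NType → NType → Type
  | var {Γ t} : Var Γ t → Tm Γ t
  | unit {Γ} : Tm Γ .unit
  | pair {Γ a b} : Tm Γ a → Tm Γ b → Tm Γ (.prod a b)
  | fst {Γ a b} : Tm Γ (.prod a b) → Tm Γ a
  | snd {Γ a b} : Tm Γ (.prod a b) → Tm Γ b

def Tm.eval {α : Type} {Γ : List NType} (ρ : Env α Γ) : ∀ {t}, Tm Γ t → Obj α t
  | _, .var v => ρ _ v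
  | _, .unit => (() : Unit)
  | _, .pair a b => ((Tm.eval ρ a, Tm.eval ρ b) : _ × _)
  | _, .fst (a := a) (b := b) p => (Tm.eval ρ p : Obj α a × Obj α b).1
  | _, .snd (a := a) (b := b) p => (Tm.eval ρ p : Obj α a × Obj α b).2

/-- Δ₀ formulas: (dis)equality of Ur-elements, ⊤, ⊥, ∧, ∨ and bounded quantifiers. -/
inductive Delta0 : List NType → Type
  | eqU {Γ} : Tm Γ .U → Tm Γ .U → Delta0 Γ
  | neU {Γ} : Tm Γ .U → Tm Γ .U → Delta0 Γ
  | tru {Γ} : Delta0 Γ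
  | fls {Γ} : Delta0 Γ
  | and {Γ} : Delta0 Γ → Delta0 Γ → Delta0 Γ
  | or {Γ} : Delta0 Γ → Delta0 Γ → Delta0 Γ
  | all {Γ t} : Tm Γ (.set t) → Delta0 (t :: Γ) → Delta0 Γ
  | ex {Γ t} : Tm Γ (.set t) → Delta0 (t :: Γ) → Delta0 Γ

/-- Satisfaction of a Δ₀ formula in an environment. -/
def Delta0.sat {α : Type} : ∀ {Γ}, Env α Γ → Delta0 Γ → Prop
  | _, ρ, .eqU a b => Tm.eval ρ a = Tm.eval ρ b
  | _, ρ, .neU a b => Tm.eval ρ a ≠ Tm.eval ρ b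
  | _, _, .tru => True
  | _, _, .fls => False
  | _, ρ, .and φ ψ => Delta0.sat ρ φ ∧ Delta0.sat ρ ψ
  | _, ρ, .or φ ψ => Delta0.sat ρ φ ∨ Delta0.sat ρ ψ
  | _, ρ, .all (t := T) s φ =>
      ∀ x : Obj _ T, x ∈ (show Set (Obj _ T) from Tm.eval ρ s) → Delta0.sat (Env.cons x ρ) φ
  | _, ρ, .ex (t := T) s φ =>
      ∃ x : Obj _ T, x ∈ (show Set (Obj _ T) from Tm.eval ρ s) ∧ Delta0.sat (Env.cons x ρ) φ

/-- Nested relational calculus expressions. -/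
inductive NRC : List NType → NType → Type
  | var {Γ t} : Var Γ t → NRC Γ t
  | unit {Γ} : NRC Γ .unit
  | pair {Γ a b} : NRC Γ a → NRC Γ b → NRC Γ (.prod a b)
  | fst {Γ a b} : NRC Γ (.prod a b) → NRC Γ a
  | snd {Γ a b} : NRC Γ (.prod a b) → NRC Γ b
  | sing {Γ t} : NRC Γ t → NRC Γ (.set t)
  | empty {Γ t} : NRC Γ (.set t)
  | union {Γ t} : NRC Γ (.set t) → NRC Γ (.set t) → NRC Γ (.set t)
  | diff {Γ t} : NRC Γ (.set t) → NRC Γ (.set t) → NRC Γ (.set t)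
  | bigUnion {Γ a b} : NRC (a :: Γ) (.set b) → NRC Γ (.set a) → NRC Γ (.set b)

/-- Semantics of NRC expressions. -/
def NRC.eval {α : Type} : ∀ {Γ}, Env α Γ → ∀ {t}, NRC Γ t → Obj α t
  | _, ρ, _, .var v => ρ _ v
  | _, _, _, .unit => (() : Unit)
  | _, ρ, _, .pair a b => ((NRC.eval ρ a, NRC.eval ρ b) : _ × _)
  | _, ρ, _, .fst (a := a) (b := b) p => (NRC.eval ρ p : Obj α a × Obj α b).1
  | _, ρ, _, .snd (a := a) (b := b) p => (NRC.eval ρ p : Obj α a × Obj α b).2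
  | _, ρ, _, .sing e => ({NRC.eval ρ e} : Set _)
  | _, _, _, .empty => (∅ : Set _)
  | _, ρ, _, .union e1 e2 => ((NRC.eval ρ e1 : Set _) ∪ (NRC.eval ρ e2 : Set _) : Set _)
  | _, ρ, _, .diff e1 e2 => ((NRC.eval ρ e1 : Set _) \ (NRC.eval ρ e2 : Set _) : Set _)
  | _, ρ, _, .bigUnion (a := a) (b := b) e2 e1 =>
      show Set (Obj α b) from
        ⋃ x ∈ (show Set (Obj α a) from NRC.eval ρ e1),
          (show Set (Obj α b) from NRC.eval (Env.cons x ρ) e2)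

/-- The Boolean type `Set(Unit)`. -/
abbrev NType.bool : NType := .set .unit

/-!
Compile φ by structural recursion into a Boolean NRC expression, reading a Boolean as a subset
of the one-point type `Unit`: true and false are `{()}` and `∅`, negation is difference from
`{()}`, conjunction is intersection (`A ∩ B = A \ (A \ B)`) and disjunction is union. The big
union `⋃{e | x ∈ s}` of Booleans is the bounded existential, and nonemptiness of a set `X` is
tested by `⋃{{()} | x ∈ X}`: so `a ≠ b` becomes nonemptiness of `{a} \ {b}`, and `=` and `∀`
are obtained by negation.
-/

def Tm.toNRC : ∀ {Γ t}, Tm Γ t → NRC Γ t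
  | _, _, .var v => .var v
  | _, _, .unit => .unit
  | _, _, .pair a b => .pair a.toNRC b.toNRC
  | _, _, .fst p => .fst p.toNRC
  | _, _, .snd p => .snd p.toNRC

namespace NRC

variable {α : Type} {Γ : List NType}

@[simp]
theorem eval_toNRC (ρ : Env α Γ) {t : NType} (e : Tm Γ t) : eval ρ e.toNRC = e.eval ρ := by
  induction e <;> simp only [Tm.toNRC, eval, Tm.eval, *] <;> rfl

def Holds (ρ : Env α Γ) (e : NRC Γ .bool) : Prop := () ∈ (show Set Unit from eval ρ e)

theorem eval_eq_singleton_of_holds {ρ : Env α Γ} {e : NRC Γ .bool} (h : Holds ρ e) :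
    eval ρ e = (show Set (Obj α .unit) from {()}) :=
  Set.eq_singleton_iff_unique_mem.2 ⟨h, fun _ _ => rfl⟩

theorem eval_eq_empty_of_not_holds {ρ : Env α Γ} {e : NRC Γ .bool} (h : ¬ Holds ρ e) :
    eval ρ e = (show Set (Obj α .unit) from ∅) :=
  Set.eq_empty_of_forall_notMem fun _ => h

def tt : NRC Γ .bool := sing unit

def not (e : NRC Γ .bool) : NRC Γ .bool := diff tt e

def inter {t : NType} (e₁ e₂ : NRC Γ (.set t)) : NRC Γ (.set t) := diff e₁ (diff e₁ e₂)

def nonempty {t : NType} (e : NRC Γ (.set t)) : NRC Γ .bool := bigUnion tt e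

@[simp]
theorem holds_tt (ρ : Env α Γ) : Holds ρ (tt : NRC Γ .bool) := rfl

@[simp]
theorem not_holds_empty (ρ : Env α Γ) : ¬ Holds ρ (empty : NRC Γ .bool) := id

@[simp]
theorem holds_not (ρ : Env α Γ) (e : NRC Γ .bool) : Holds ρ e.not ↔ ¬ Holds ρ e :=
  and_iff_right rfl

@[simp]
theorem holds_inter (ρ : Env α Γ) (e₁ e₂ : NRC Γ .bool) :
    Holds ρ (inter e₁ e₂) ↔ Holds ρ e₁ ∧ Holds ρ e₂ :=
  Set.ext_iff.1 (Set.sdiff_sdiff_right_self (s := (show Set Unit from eval ρ e₁)) _) ()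

@[simp]
theorem holds_union (ρ : Env α Γ) (e₁ e₂ : NRC Γ .bool) :
    Holds ρ (union e₁ e₂) ↔ Holds ρ e₁ ∨ Holds ρ e₂ := Iff.rfl

@[simp]
theorem holds_bigUnion (ρ : Env α Γ) {t : NType} (e : NRC (t :: Γ) .bool) (s : NRC Γ (.set t)) :
    Holds ρ (bigUnion e s) ↔
      ∃ x : Obj α t, x ∈ (show Set (Obj α t) from eval ρ s) ∧ Holds (Env.cons x ρ) e := by
  simp only [Holds, eval]
  exact Set.mem_iUnion₂.trans (exists_congr fun _ => exists_prop)

@[simp]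
theorem holds_nonempty (ρ : Env α Γ) {t : NType} (e : NRC Γ (.set t)) :
    Holds ρ e.nonempty ↔ (show Set (Obj α t) from eval ρ e).Nonempty := by
  simp only [nonempty, holds_bigUnion, holds_tt, and_true]
  rfl

end NRC

def Delta0.verifier : ∀ {Γ}, Delta0 Γ → NRC Γ .bool
  | _, .eqU a b => (NRC.diff (.sing a.toNRC) (.sing b.toNRC)).nonempty.not
  | _, .neU a b => (NRC.diff (.sing a.toNRC) (.sing b.toNRC)).nonempty
  | _, .tru => .tt
  | _, .fls => .empty
  | _, .and φ ψ => .inter φ.verifier ψ.verifier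
  | _, .or φ ψ => .union φ.verifier ψ.verifier
  | _, .all s φ => (NRC.bigUnion φ.verifier.not s.toNRC).not
  | _, .ex s φ => .bigUnion φ.verifier s.toNRC

theorem Delta0.holds_verifier {α : Type} {Γ : List NType} (φ : Delta0 Γ) (ρ : Env α Γ) :
    NRC.Holds ρ φ.verifier ↔ φ.sat ρ := by
  induction φ with
  | eqU a b | neU a b => simp [verifier, sat, NRC.eval, Set.sdiff_nonempty]
  | tru | fls => simp [verifier, sat]
  | and φ ψ ihφ ihψ | or φ ψ ihφ ihψ => simp [verifier, sat, ihφ, ihψ]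
  | all s φ ih | ex s φ ih => simp [verifier, sat, ih]

/-- For every Δ₀ formula φ over the nested relational type system there is
an NRC expression `Verify_φ` of type `Bool = Set(Unit)` which, for every assignment of the
free variables, evaluates to the singleton `{()}` if φ holds and to `∅` otherwise. -/
theorem delta0_verify_in_NRC (Γ : List NType) (φ : Delta0 Γ) :
    ∃ E : NRC Γ NType.bool,
      ∀ (α : Type) (ρ : Env α Γ),
        (Delta0.sat ρ φ →
          NRC.eval ρ E = (show Set (Obj α .unit) from {(() : Obj α .unit)})) ∧
        (¬ Delta0.sat ρ φ →
          NRC.eval ρ E = (show Set (Obj α .unit) from ∅)) := by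
  refine ⟨φ.verifier, fun α ρ => ⟨fun h => ?_, fun h => ?_⟩⟩
  · exact NRC.eval_eq_singleton_of_holds ((φ.holds_verifier ρ).2 h)
  · exact NRC.eval_eq_empty_of_not_holds (mt (φ.holds_verifier ρ).1 h)
end

section
/- There is a Δ0-definable predicate Im_Pair on U_{max(n1,n2)+2} characterizing the image of the Kuratowski pairing: Im_Pair(a) holds if and only if there exist a1 : U_{n1} and a2 : U_{n2} with Pair(a1,a2) = a; moreover in that case Pair(π̂1(a), π̂2(a)) = a. -/
/-- Monadic types `U_0 = U`, `U_{n+1} = Set(U_n)`. -/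
def MT : ℕ → NType
  | 0 => .U
  | n + 1 => .set (MT n)

/-- The iterated-singleton embedding `U_n → U_{n+k}`. -/
def upBy {α : Type} {n : ℕ} : ∀ k : ℕ, Obj α (MT n) → Obj α (MT (n + k))
  | 0, x => x
  | k + 1, x => (show Set (Obj α (MT (n + k))) from {upBy k x})

/-- The embedding `↑ : U_n → U_m` for `n ≤ m`. -/
def upTo {α : Type} {n : ℕ} (m : ℕ) (h : n ≤ m) (x : Obj α (MT n)) : Obj α (MT m) :=
  cast (congrArg (fun k => Obj α (MT k)) (Nat.add_sub_cancel' h)) (upBy (m - n) x)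

/-- Kuratowski-style pairing `Pair(a,b) = {{↑a}, {↑a, ↑b}}` on monadic types. -/
def kPair {α : Type} {n1 n2 : ℕ} (a : Obj α (MT n1)) (b : Obj α (MT n2)) :
    Obj α (MT (max n1 n2 + 2)) :=
  show Set (Set (Obj α (MT (max n1 n2)))) from
    { {upTo (max n1 n2) (le_max_left n1 n2) a},
      {upTo (max n1 n2) (le_max_left n1 n2) a, upTo (max n1 n2) (le_max_right n1 n2) b} }

/-- The monadic depth of a nested relational type. -/
def mdepth : NType → ℕ
  | .U => 0
  | .unit => 0
  | .set t => 1 + mdepth t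
  | .prod a b => 2 + max (mdepth a) (mdepth b)

/-!
A pair `{{u}, {u, v}}` is recognised by bounded quantification over its own elements: it has
two elements `A`, `B` with `A = {u}` and `B = {u, v}`, where `u` and `v` are iterated
singletons of the depths at which `kPair` embeds its arguments. Equality at monadic types is
itself Δ₀, by extensionality down to the Ur-elements. Since Kuratowski pairing and the
iterated-singleton embeddings are injective, the projections are obtained by inverting `kPair`.
-/

open Function

theorem Set.kuratowski_pair_inj {β : Type*} {a b c d : β}
    (h : ({{a}, {a, b}} : Set (Set β)) = {{c}, {c, d}}) : a = c ∧ b = d := by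
  rcases Set.pair_eq_pair_iff.mp h with ⟨h1, h2⟩ | ⟨h1, h2⟩
  · obtain rfl := Set.singleton_injective h1
    grind [Set.pair_eq_pair_iff]
  · have hc : c = a := (Set.ext_iff.mp h1 c).mpr (Set.mem_insert _ _)
    have hd : d = a := (Set.ext_iff.mp h1 d).mpr (Set.mem_insert_of_mem _ rfl)
    have hb : b = c := (Set.ext_iff.mp h2 b).mp (Set.mem_insert_of_mem _ rfl)
    exact ⟨hc.symm, hb.trans (hc.trans hd.symm)⟩

section

variable {α : Type}

instance Obj.instNonemptyMT [Nonempty α] : ∀ n, Nonempty (Obj α (MT n))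
  | 0 => ‹Nonempty α›
  | _ + 1 => ⟨(∅ : Set _)⟩

theorem upBy_injective {n : ℕ} : ∀ k, Injective (upBy (α := α) (n := n) k)
  | 0 => injective_id
  | k + 1 => Set.singleton_injective.comp (upBy_injective k)

theorem upTo_injective {n m : ℕ} (h : n ≤ m) : Injective (upTo (α := α) m h) :=
  fun _ _ e => upBy_injective _ ((cast_inj _).mp e)

theorem upTo_add_eq_upBy {n : ℕ} (k : ℕ) (h : n ≤ n + k) (a : Obj α (MT n)) :
    upTo (n + k) h a = upBy k a := by
  rw [upTo, cast_eq_iff_heq, Nat.add_sub_cancel_left]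

theorem kPair_inj {n1 n2 : ℕ} {a a' : Obj α (MT n1)} {b b' : Obj α (MT n2)} :
    kPair a b = kPair a' b' ↔ a = a' ∧ b = b' := by
  refine ⟨fun h => ?_, fun ⟨ha, hb⟩ => ha ▸ hb ▸ rfl⟩
  obtain ⟨ha, hb⟩ := Set.kuratowski_pair_inj h
  exact ⟨upTo_injective _ ha, upTo_injective _ hb⟩

theorem kPair_uncurry_injective {n1 n2 : ℕ} :
    Injective (uncurry (kPair (α := α) (n1 := n1) (n2 := n2))) :=
  fun _ _ h => Prod.ext_iff.mpr (kPair_inj.mp h)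

namespace Tm

def wk {Γ : List NType} {s t : NType} : Tm Γ t → Tm (s :: Γ) t
  | .var v => .var (.succ v)
  | .unit => .unit
  | .pair a b => .pair a.wk b.wk
  | .fst p => .fst p.wk
  | .snd p => .snd p.wk

@[simp]
theorem eval_wk {Γ : List NType} {s t : NType} (x : Obj α s) (ρ : Env α Γ) (e : Tm Γ t) :
    eval (Env.cons x ρ) e.wk = eval ρ e := by
  induction e <;> simp [wk, eval, Env.cons, *] <;> rfl

/-- `eval_wk` with the type index written `.set (MT n)`, as bounded quantifiers over a term of
type `MT (n + 1)` present it; `simp` does not unfold `MT` to match `eval_wk` itself. -/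
@[simp]
theorem eval_wk_MT_succ {Γ : List NType} {s : NType} {n : ℕ} (x : Obj α s) (ρ : Env α Γ)
    (e : Tm Γ (MT (n + 1))) :
    eval (t := .set (MT n)) (Env.cons x ρ) (wk (t := MT (n + 1)) e) = eval ρ e :=
  eval_wk x ρ e

@[simp]
theorem eval_var_zero {Γ : List NType} {t : NType} (x : Obj α t) (ρ : Env α Γ) :
    eval (Env.cons x ρ) (.var .zero) = x := rfl

@[simp]
theorem eval_var_succ {Γ : List NType} {s t : NType} (x : Obj α s) (ρ : Env α Γ) (v : Var Γ t) :
    eval (Env.cons x ρ) (.var v.succ) = eval ρ (.var v) := rfl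

end Tm

namespace Delta0

variable {Γ : List NType}

def eqMT : ∀ (n : ℕ) {Γ : List NType}, Tm Γ (MT n) → Tm Γ (MT n) → Delta0 Γ
  | 0, _, s, t => .eqU s t
  | n + 1, _, s, t =>
      .and (.all s (.ex t.wk (eqMT n (.var .zero) (.var (.succ .zero)))))
           (.all t (.ex s.wk (eqMT n (.var .zero) (.var (.succ .zero)))))

@[simp]
theorem sat_eqMT : ∀ (n : ℕ) {Γ : List NType} (ρ : Env α Γ) (s t : Tm Γ (MT n)),
    sat ρ (eqMT n s t) ↔ Tm.eval ρ s = Tm.eval ρ t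
  | 0, _, _, _, _ => Iff.rfl
  | n + 1, _, ρ, s, t => by
    simp only [eqMT, sat, Tm.eval_wk_MT_succ, Tm.eval_var_zero, Tm.eval_var_succ, sat_eqMT n,
      exists_eq_right]
    exact Set.Subset.antisymm_iff.symm

def isSingletonOf (n : ℕ) (s : Tm Γ (MT (n + 1))) (t : Tm Γ (MT n)) : Delta0 Γ :=
  .and (.ex s (eqMT n (.var .zero) t.wk)) (.all s (eqMT n (.var .zero) t.wk))

@[simp]
theorem sat_isSingletonOf (n : ℕ) (ρ : Env α Γ) (s : Tm Γ (MT (n + 1))) (t : Tm Γ (MT n)) :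
    sat ρ (isSingletonOf n s t) ↔ Tm.eval ρ s = ({Tm.eval ρ t} : Set _) := by
  simp only [isSingletonOf, sat, sat_eqMT, Tm.eval_var_zero, Tm.eval_wk, exists_eq_right]
  exact Set.eq_singleton_iff_unique_mem.symm

def isPairOf (n : ℕ) (s : Tm Γ (MT (n + 1))) (t₁ t₂ : Tm Γ (MT n)) : Delta0 Γ :=
  .and (.ex s (eqMT n (.var .zero) t₁.wk)) <| .and (.ex s (eqMT n (.var .zero) t₂.wk)) <|
    .all s (.or (eqMT n (.var .zero) t₁.wk) (eqMT n (.var .zero) t₂.wk))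

@[simp]
theorem sat_isPairOf (n : ℕ) (ρ : Env α Γ) (s : Tm Γ (MT (n + 1))) (t₁ t₂ : Tm Γ (MT n)) :
    sat ρ (isPairOf n s t₁ t₂) ↔ Tm.eval ρ s = ({Tm.eval ρ t₁, Tm.eval ρ t₂} : Set _) := by
  simp only [isPairOf, sat, sat_eqMT, Tm.eval_var_zero, Tm.eval_wk, exists_eq_right]
  refine ⟨fun ⟨h₁, h₂, h⟩ => Set.Subset.antisymm h (Set.pair_subset h₁ h₂), fun h => ?_⟩
  exact ⟨(Set.ext_iff.mp h _).mpr (Or.inl rfl), (Set.ext_iff.mp h _).mpr (Or.inr rfl),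
    fun x hx => (Set.ext_iff.mp h x).mp hx⟩

def isIterSingleton : ℕ → ∀ (m : ℕ) {Γ : List NType}, Tm Γ (MT m) → Delta0 Γ
  | 0, _, _, _ => .tru
  | _ + 1, 0, _, _ => .fls
  | k + 1, m + 1, _, u =>
      .ex u (.and (isIterSingleton k m (.var .zero)) (isSingletonOf m u.wk (.var .zero)))

theorem sat_isIterSingleton (n : ℕ) :
    ∀ (k : ℕ) {Γ : List NType} (ρ : Env α Γ) (u : Tm Γ (MT (n + k))),
      sat ρ (isIterSingleton k (n + k) u) ↔ ∃ a : Obj α (MT n), upBy k a = Tm.eval ρ u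
  | 0, _, ρ, u => by simp [isIterSingleton, sat, upBy]
  | k + 1, _, ρ, u => by
    simp only [isIterSingleton, sat, Nat.add_eq, sat_isIterSingleton n k, sat_isSingletonOf,
      Tm.eval_var_zero, Tm.eval_wk]
    constructor
    · rintro ⟨w, -, ⟨a, rfl⟩, hu⟩
      exact ⟨a, hu.symm⟩
    · rintro ⟨a, hu⟩
      exact ⟨upBy k a, hu ▸ rfl, ⟨a, rfl⟩, hu.symm⟩

theorem sat_isIterSingleton_sub {n m : ℕ} (h : n ≤ m) (ρ : Env α Γ) (u : Tm Γ (MT m)) :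
    sat ρ (isIterSingleton (m - n) m u) ↔ ∃ a : Obj α (MT n), upTo m h a = Tm.eval ρ u := by
  obtain ⟨k, rfl⟩ := Nat.exists_eq_add_of_le h
  simp only [Nat.add_sub_cancel_left, upTo_add_eq_upBy]
  exact sat_isIterSingleton n k ρ u

/-- In de Bruijn notation with free variable `x`:
`∃ A ∈ x, ∃ B ∈ x, ∃ u ∈ A, ∃ v ∈ B, x = {A, B} ∧ A = {u} ∧ B = {u, v} ∧ ↑-image u ∧ ↑-image v`. -/
def isKPair (n1 n2 : ℕ) : Delta0 [MT (max n1 n2 + 2)] :=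
  .ex (.var .zero) <| .ex (.var (.succ .zero)) <| .ex (.var (.succ .zero)) <|
    .ex (.var (.succ .zero)) <|
    .and (isPairOf (max n1 n2 + 1) (.var (.succ (.succ (.succ (.succ .zero)))))
      (.var (.succ (.succ (.succ .zero)))) (.var (.succ (.succ .zero)))) <|
    .and (isSingletonOf (max n1 n2) (.var (.succ (.succ (.succ .zero)))) (.var (.succ .zero))) <|
    .and (isPairOf (max n1 n2) (.var (.succ (.succ .zero))) (.var (.succ .zero)) (.var .zero)) <|
    .and (isIterSingleton (max n1 n2 - n1) (max n1 n2) (.var (.succ .zero)))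
      (isIterSingleton (max n1 n2 - n2) (max n1 n2) (.var .zero))

theorem sat_isKPair (n1 n2 : ℕ) (x : Obj α (MT (max n1 n2 + 2))) :
    sat (Env.cons x Env.nil) (isKPair n1 n2) ↔
      ∃ (a : Obj α (MT n1)) (b : Obj α (MT n2)), kPair a b = x := by
  simp only [isKPair, sat, sat_isPairOf, sat_isSingletonOf, Tm.eval_var_zero, Tm.eval_var_succ,
    sat_isIterSingleton_sub (le_max_left n1 n2), sat_isIterSingleton_sub (le_max_right n1 n2)]
  constructor
  · rintro ⟨A, -, B, -, u, -, v, -, rfl, rfl, rfl, ⟨a, rfl⟩, ⟨b, rfl⟩⟩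
    exact ⟨a, b, rfl⟩
  · rintro ⟨a, b, rfl⟩
    exact ⟨_, Or.inl rfl, _, Or.inr rfl, _, rfl, _, Or.inr rfl, rfl, rfl, rfl, ⟨a, rfl⟩, ⟨b, rfl⟩⟩

end Delta0

end

/-- There is a Δ₀-definable predicate `Im_Pair` on `U_{max n1 n2 + 2}`
characterizing the image of the Kuratowski pairing: `Im_Pair(a)` holds iff there exist
`a1 : U_{n1}` and `a2 : U_{n2}` with `Pair(a1,a2) = a`; moreover in that case
`Pair(π̂1(a), π̂2(a)) = a` for the projection operations `π̂1, π̂2`. -/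
theorem kuratowski_image_delta0 (n1 n2 : ℕ) :
    ∃ φ : Delta0 [MT (max n1 n2 + 2)],
      ∀ (α : Type) [Inhabited α],
        ∃ (p1 : Obj α (MT (max n1 n2 + 2)) → Obj α (MT n1))
          (p2 : Obj α (MT (max n1 n2 + 2)) → Obj α (MT n2)),
          (∀ (a : Obj α (MT n1)) (b : Obj α (MT n2)),
            p1 (kPair a b) = a ∧ p2 (kPair a b) = b) ∧
          (∀ x : Obj α (MT (max n1 n2 + 2)),
            (Delta0.sat (Env.cons x Env.nil) φ ↔
              ∃ (a1 : Obj α (MT n1)) (a2 : Obj α (MT n2)), kPair a1 a2 = x)) ∧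
          (∀ x : Obj α (MT (max n1 n2 + 2)),
            Delta0.sat (Env.cons x Env.nil) φ → kPair (p1 x) (p2 x) = x) := by
  refine ⟨Delta0.isKPair n1 n2, fun α _ => ?_⟩
  let unpair := invFun (uncurry (kPair (α := α) (n1 := n1) (n2 := n2)))
  have unpair_kPair (a : Obj α (MT n1)) (b : Obj α (MT n2)) : unpair (kPair a b) = (a, b) :=
    leftInverse_invFun kPair_uncurry_injective (a, b)
  refine ⟨fun x => (unpair x).1, fun x => (unpair x).2, fun a b => by simp [unpair_kPair],
    Delta0.sat_isKPair n1 n2, fun x hx => ?_⟩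
  obtain ⟨a, b, rfl⟩ := (Delta0.sat_isKPair n1 n2 x).mp hx
  simp [unpair_kPair]
end

section
/- Soundness of the restricted intuitionistic sequent calculus: if a sequent Θ; Γ ⊢ ψ is derivable, then for every assignment of the free variables to objects of appropriate nested relational types satisfying all membership atoms in Θ and all Δ0 formulas in Γ, the conclusion ψ holds (under the standard semantics where t ⊆_T u means set containment, t =_T u means equality, and t ∈_T u means membership). -/
/-! ### Renamings and substitutions -/

/-- Renamings between contexts. -/
def Ren (Γ Δ : List NType) : Type := ∀ t, Var Γ t → Var Δ t

/-- Weakening renaming. -/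
def Ren.wk {Γ : List NType} {s : NType} : Ren Γ (s :: Γ) := fun _ v => .succ v

def Ren.lift {Γ Δ : List NType} {s : NType} (r : Ren Γ Δ) : Ren (s :: Γ) (s :: Δ) :=
  fun t v =>
    match v with
    | .zero => .zero
    | .succ w => .succ (r t w)

def Tm.rename {Γ Δ : List NType} (r : Ren Γ Δ) : ∀ {t}, Tm Γ t → Tm Δ t
  | _, .var v => .var (r _ v)
  | _, .unit => .unit
  | _, .pair a b => .pair (a.rename r) (b.rename r)
  | _, .fst p => .fst (p.rename r)
  | _, .snd p => .snd (p.rename r)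

def Delta0.rename : ∀ {Γ Δ}, Ren Γ Δ → Delta0 Γ → Delta0 Δ
  | _, _, r, .eqU a b => .eqU (a.rename r) (b.rename r)
  | _, _, r, .neU a b => .neU (a.rename r) (b.rename r)
  | _, _, _, .tru => .tru
  | _, _, _, .fls => .fls
  | _, _, r, .and φ ψ => .and (φ.rename r) (ψ.rename r)
  | _, _, r, .or φ ψ => .or (φ.rename r) (ψ.rename r)
  | _, _, r, .all s φ => .all (s.rename r) (φ.rename r.lift)
  | _, _, r, .ex s φ => .ex (s.rename r) (φ.rename r.lift)

/-- Substitutions mapping variables of `Γ` to terms over `Δ`. -/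
def Subst (Γ Δ : List NType) : Type := ∀ t, Var Γ t → Tm Δ t

def Subst.id {Γ : List NType} : Subst Γ Γ := fun _ v => .var v

/-- Substituting a term for the topmost variable. -/
def Subst.cons {Γ Δ : List NType} {s : NType} (u : Tm Δ s) (σ : Subst Γ Δ) : Subst (s :: Γ) Δ :=
  fun t v =>
    match v with
    | .zero => u
    | .succ w => σ t w

def Subst.lift {Γ Δ : List NType} {s : NType} (σ : Subst Γ Δ) : Subst (s :: Γ) (s :: Δ) :=
  fun t v =>
    match v with
    | .zero => .var .zero
    | .succ w => (σ t w).rename Ren.wk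

def Tm.subst {Γ Δ : List NType} (σ : Subst Γ Δ) : ∀ {t}, Tm Γ t → Tm Δ t
  | _, .var v => σ _ v
  | _, .unit => .unit
  | _, .pair a b => .pair (a.subst σ) (b.subst σ)
  | _, .fst p => .fst (p.subst σ)
  | _, .snd p => .snd (p.subst σ)

def Delta0.subst : ∀ {Γ Δ}, Subst Γ Δ → Delta0 Γ → Delta0 Δ
  | _, _, σ, .eqU a b => .eqU (a.subst σ) (b.subst σ)
  | _, _, σ, .neU a b => .neU (a.subst σ) (b.subst σ)
  | _, _, _, .tru => .tru
  | _, _, _, .fls => .fls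
  | _, _, σ, .and φ ψ => .and (φ.subst σ) (ψ.subst σ)
  | _, _, σ, .or φ ψ => .or (φ.subst σ) (ψ.subst σ)
  | _, _, σ, .all s φ => .all (s.subst σ) (φ.subst σ.lift)
  | _, _, σ, .ex s φ => .ex (s.subst σ) (φ.subst σ.lift)

/-! ### Sequents: membership contexts and right-hand sides -/

/-- A membership atom `t ∈_T u`. -/
abbrev MemAtom (Γ : List NType) : Type := (t : NType) × (Tm Γ t × Tm Γ (.set t))

/-- A membership context is a (multi)set of membership atoms. -/
abbrev MemCtx (Γ : List NType) : Type := List (MemAtom Γ)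

def MemAtom.subst {Γ Δ : List NType} (σ : Subst Γ Δ) (a : MemAtom Γ) : MemAtom Δ :=
  ⟨a.1, (a.2.1.subst σ, a.2.2.subst σ)⟩

def MemCtx.subst {Γ Δ : List NType} (σ : Subst Γ Δ) (Θ : MemCtx Γ) : MemCtx Δ :=
  Θ.map (MemAtom.subst σ)

def MemAtom.rename {Γ Δ : List NType} (r : Ren Γ Δ) (a : MemAtom Γ) : MemAtom Δ :=
  ⟨a.1, (a.2.1.rename r, a.2.2.rename r)⟩

def MemCtx.rename {Γ Δ : List NType} (r : Ren Γ Δ) (Θ : MemCtx Γ) : MemCtx Δ :=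
  Θ.map (MemAtom.rename r)

/-- Right-hand side formulas of sequents: `t ∈_T u`, `t =_T u`, or `t ⊆_T u`. -/
inductive RHS (Γ : List NType) : Type
  | mem {t : NType} : Tm Γ t → Tm Γ (.set t) → RHS Γ
  | eq {t : NType} : Tm Γ t → Tm Γ t → RHS Γ
  | sub {t : NType} : Tm Γ (.set t) → Tm Γ (.set t) → RHS Γ

def RHS.subst {Γ Δ : List NType} (σ : Subst Γ Δ) : RHS Γ → RHS Δ
  | .mem t u => .mem (t.subst σ) (u.subst σ)
  | .eq t u => .eq (t.subst σ) (u.subst σ)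
  | .sub t u => .sub (t.subst σ) (u.subst σ)

def RHS.rename {Γ Δ : List NType} (r : Ren Γ Δ) : RHS Γ → RHS Δ
  | .mem t u => .mem (t.rename r) (u.rename r)
  | .eq t u => .eq (t.rename r) (u.rename r)
  | .sub t u => .sub (t.rename r) (u.rename r)

/-- The substitution replacing a product-typed variable by a pair of fresh variables. -/
def etaSub {Γ : List NType} {a b : NType} : Subst (.prod a b :: Γ) (a :: b :: Γ) :=
  Subst.cons (.pair (.var .zero) (.var (.succ .zero)))
    (fun _ v => .var (.succ (.succ v)))

/-! ### The restricted intuitionistic sequent calculus (Figure 2) -/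

inductive SeqD : ∀ Γ : List NType, MemCtx Γ → List (Delta0 Γ) → RHS Γ → Prop
  /-- exchange: contexts are multisets -/
  | perm {Γ : List NType} {Θ Θ' : MemCtx Γ} {G G' : List (Delta0 Γ)} {ψ : RHS Γ} :
      Θ.Perm Θ' → G.Perm G' → SeqD Γ Θ G ψ → SeqD Γ Θ' G' ψ
  /-- Contraction -/
  | contraction {Γ : List NType} {Θ : MemCtx Γ} {G : List (Delta0 Γ)} {φ : Delta0 Γ}
      {ψ : RHS Γ} : SeqD Γ Θ (φ :: φ :: G) ψ → SeqD Γ Θ (φ :: G) ψ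
  /-- ∈_U-R -/
  | memU_R {Γ : List NType} {Θ : MemCtx Γ} {G : List (Delta0 Γ)} {t : Tm Γ .U}
      {u : Tm Γ (.set .U)} : SeqD Γ (⟨.U, (t, u)⟩ :: Θ) G (.mem t u)
  /-- =_Set-R -/
  | eqSet_R {Γ : List NType} {Θ : MemCtx Γ} {G : List (Delta0 Γ)} {T : NType}
      {t u : Tm Γ (.set T)} :
      SeqD Γ Θ G (.sub t u) → SeqD Γ Θ G (.sub u t) → SeqD Γ Θ G (.eq t u)
  /-- =_×-R -/
  | eqProd_R {Γ : List NType} {Θ : MemCtx Γ} {G : List (Delta0 Γ)} {a b : NType}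
      {t u : Tm Γ (.prod a b)} :
      SeqD Γ Θ G (.eq (.fst t) (.fst u)) → SeqD Γ Θ G (.eq (.snd t) (.snd u)) →
      SeqD Γ Θ G (.eq t u)
  /-- =_Unit-R -/
  | eqUnit_R {Γ : List NType} {Θ : MemCtx Γ} {G : List (Delta0 Γ)} {t u : Tm Γ .unit} :
      SeqD Γ Θ G (.eq t u)
  /-- =_U-R (via a fresh set variable z) -/
  | eqU_R {Γ : List NType} {Θ : MemCtx Γ} {G : List (Delta0 Γ)} {t u : Tm Γ .U} :
      SeqD (.set .U :: Γ)
        (⟨.U, (t.rename Ren.wk, .var .zero)⟩ :: MemCtx.rename Ren.wk Θ)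
        (G.map (Delta0.rename Ren.wk)) (.mem (u.rename Ren.wk) (.var .zero)) →
      SeqD Γ Θ G (.eq t u)
  /-- ⊆-R (fresh variable z) -/
  | sub_R {Γ : List NType} {Θ : MemCtx Γ} {G : List (Delta0 Γ)} {T : NType}
      {t u : Tm Γ (.set T)} :
      SeqD (T :: Γ)
        (⟨T, (.var .zero, t.rename Ren.wk)⟩ :: MemCtx.rename Ren.wk Θ)
        (G.map (Delta0.rename Ren.wk)) (.mem (.var .zero) (u.rename Ren.wk)) →
      SeqD Γ Θ G (.sub t u)
  /-- ∈_Set-R -/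
  | memSet_R {Γ : List NType} {Θ : MemCtx Γ} {G : List (Delta0 Γ)} {T : NType}
      {t u : Tm Γ (.set T)} {v : Tm Γ (.set (.set T))} :
      SeqD Γ (⟨.set T, (t, v)⟩ :: Θ) G (.eq t u) →
      SeqD Γ (⟨.set T, (t, v)⟩ :: Θ) G (.mem u v)
  /-- ⊥-L -/
  | bot_L {Γ : List NType} {Θ : MemCtx Γ} {G : List (Delta0 Γ)} {T : NType} {t : Tm Γ T}
      {u : Tm Γ (.set T)} : SeqD Γ Θ (.fls :: G) (.mem t u)
  /-- ∧-L -/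
  | and_L {Γ : List NType} {Θ : MemCtx Γ} {G : List (Delta0 Γ)} {φ1 φ2 : Delta0 Γ}
      {T : NType} {t : Tm Γ T} {u : Tm Γ (.set T)} :
      SeqD Γ Θ (φ1 :: φ2 :: G) (.mem t u) → SeqD Γ Θ (.and φ1 φ2 :: G) (.mem t u)
  /-- ∨-L -/
  | or_L {Γ : List NType} {Θ : MemCtx Γ} {G : List (Delta0 Γ)} {φ1 φ2 : Delta0 Γ}
      {T : NType} {t : Tm Γ T} {u : Tm Γ (.set T)} :
      SeqD Γ Θ (φ1 :: G) (.mem t u) → SeqD Γ Θ (φ2 :: G) (.mem t u) →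
      SeqD Γ Θ (.or φ1 φ2 :: G) (.mem t u)
  /-- ∀-L (bounded, instantiating at a term w with w ∈ z in Θ) -/
  | all_L {Γ : List NType} {Θ : MemCtx Γ} {G : List (Delta0 Γ)} {T T' : NType}
      {w : Tm Γ T} {z : Tm Γ (.set T)} {φ : Delta0 (T :: Γ)} {v : Tm Γ T'}
      {vv : Tm Γ (.set T')} :
      SeqD Γ (⟨T, (w, z)⟩ :: Θ) (φ.subst (Subst.cons w Subst.id) :: G) (.mem v vv) →
      SeqD Γ (⟨T, (w, z)⟩ :: Θ) (.all z φ :: G) (.mem v vv)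
  /-- ∃-L (bounded, fresh variable) -/
  | ex_L {Γ : List NType} {Θ : MemCtx Γ} {G : List (Delta0 Γ)} {T T' : NType}
      {y : Tm Γ (.set T)} {φ : Delta0 (T :: Γ)} {v : Tm Γ T'} {vv : Tm Γ (.set T')} :
      SeqD (T :: Γ)
        (⟨T, (.var .zero, y.rename Ren.wk)⟩ :: MemCtx.rename Ren.wk Θ)
        (φ :: G.map (Delta0.rename Ren.wk))
        (.mem (v.rename Ren.wk) (vv.rename Ren.wk)) →
      SeqD Γ Θ (.ex y φ :: G) (.mem v vv)
  /-- =-subst -/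
  | eq_subst {Γ : List NType} {Θ : MemCtx (.U :: Γ)} {G : List (Delta0 (.U :: Γ))}
      {y : Tm Γ .U} {T' : NType} {v : Tm (.U :: Γ) T'} {vv : Tm (.U :: Γ) (.set T')} :
      SeqD Γ (MemCtx.subst (Subst.cons y Subst.id) Θ)
        (G.map (Delta0.subst (Subst.cons y Subst.id)))
        (RHS.subst (Subst.cons y Subst.id) (.mem v vv)) →
      SeqD (.U :: Γ) Θ (.eqU (.var .zero) (y.rename Ren.wk) :: G) (.mem v vv)
  /-- ≠-L -/
  | ne_L {Γ : List NType} {Θ : MemCtx Γ} {G : List (Delta0 Γ)} {t : Tm Γ .U}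
      {T' : NType} {v : Tm Γ T'} {vv : Tm Γ (.set T')} :
      SeqD Γ Θ (.neU t t :: G) (.mem v vv)
  /-- ×_β (first projection) -/
  | prod_beta1 {Γ : List NType} {a b : NType} {Θ : MemCtx (a :: Γ)}
      {G : List (Delta0 (a :: Γ))} {t1 : Tm Γ a} {t2 : Tm Γ b} {T' : NType}
      {v : Tm (a :: Γ) T'} {vv : Tm (a :: Γ) (.set T')} :
      SeqD Γ (MemCtx.subst (Subst.cons t1 Subst.id) Θ)
        (G.map (Delta0.subst (Subst.cons t1 Subst.id)))
        (RHS.subst (Subst.cons t1 Subst.id) (.mem v vv)) →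
      SeqD Γ (MemCtx.subst (Subst.cons (.fst (.pair t1 t2)) Subst.id) Θ)
        (G.map (Delta0.subst (Subst.cons (.fst (.pair t1 t2)) Subst.id)))
        (RHS.subst (Subst.cons (.fst (.pair t1 t2)) Subst.id) (.mem v vv))
  /-- ×_β (second projection) -/
  | prod_beta2 {Γ : List NType} {a b : NType} {Θ : MemCtx (b :: Γ)}
      {G : List (Delta0 (b :: Γ))} {t1 : Tm Γ a} {t2 : Tm Γ b} {T' : NType}
      {v : Tm (b :: Γ) T'} {vv : Tm (b :: Γ) (.set T')} :
      SeqD Γ (MemCtx.subst (Subst.cons t2 Subst.id) Θ)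
        (G.map (Delta0.subst (Subst.cons t2 Subst.id)))
        (RHS.subst (Subst.cons t2 Subst.id) (.mem v vv)) →
      SeqD Γ (MemCtx.subst (Subst.cons (.snd (.pair t1 t2)) Subst.id) Θ)
        (G.map (Delta0.subst (Subst.cons (.snd (.pair t1 t2)) Subst.id)))
        (RHS.subst (Subst.cons (.snd (.pair t1 t2)) Subst.id) (.mem v vv))
  /-- ×_η -/
  | prod_eta {Γ : List NType} {a b : NType} {Θ : MemCtx (.prod a b :: Γ)}
      {G : List (Delta0 (.prod a b :: Γ))} {T' : NType} {v : Tm (.prod a b :: Γ) T'}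
      {vv : Tm (.prod a b :: Γ) (.set T')} :
      SeqD (a :: b :: Γ) (MemCtx.subst etaSub Θ) (G.map (Delta0.subst etaSub))
        (RHS.subst etaSub (.mem v vv)) →
      SeqD (.prod a b :: Γ) Θ G (.mem v vv)

/-! ### Semantics of sequents -/

def MemAtom.sat {α : Type} {Γ : List NType} (ρ : Env α Γ) (a : MemAtom Γ) : Prop :=
  Tm.eval ρ a.2.1 ∈ (show Set (Obj α a.1) from Tm.eval ρ a.2.2)

def MemCtx.sat {α : Type} {Γ : List NType} (ρ : Env α Γ) (Θ : MemCtx Γ) : Prop :=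
  ∀ a ∈ Θ, MemAtom.sat ρ a

def CtxSat {α : Type} {Γ : List NType} (ρ : Env α Γ) (G : List (Delta0 Γ)) : Prop :=
  ∀ φ ∈ G, Delta0.sat ρ φ

def RHS.sat {α : Type} {Γ : List NType} (ρ : Env α Γ) : RHS Γ → Prop
  | .mem (t := T) t u => Tm.eval ρ t ∈ (show Set (Obj α T) from Tm.eval ρ u)
  | .eq t u => Tm.eval ρ t = Tm.eval ρ u
  | .sub (t := T) t u =>
      (show Set (Obj α T) from Tm.eval ρ t) ⊆ (show Set (Obj α T) from Tm.eval ρ u)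

/-! ### Free variables -/

def Tm.fv {Γ : List NType} : ∀ {t}, Tm Γ t → Set ((s : NType) × Var Γ s)
  | _, .var v => {⟨_, v⟩}
  | _, .unit => ∅
  | _, .pair a b => a.fv ∪ b.fv
  | _, .fst p => p.fv
  | _, .snd p => p.fv

/-- Remove the topmost (bound) variable from a set of variables. -/
def dropFv {Γ : List NType} {a : NType} (S : Set ((s : NType) × Var (a :: Γ) s)) :
    Set ((s : NType) × Var Γ s) :=
  {v | (⟨v.1, .succ v.2⟩ : (s : NType) × Var (a :: Γ) s) ∈ S}

def Delta0.fv : ∀ {Γ : List NType}, Delta0 Γ → Set ((s : NType) × Var Γ s)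
  | _, .eqU a b => a.fv ∪ b.fv
  | _, .neU a b => a.fv ∪ b.fv
  | _, .tru => ∅
  | _, .fls => ∅
  | _, .and φ ψ => φ.fv ∪ ψ.fv
  | _, .or φ ψ => φ.fv ∪ ψ.fv
  | _, .all s φ => s.fv ∪ dropFv φ.fv
  | _, .ex s φ => s.fv ∪ dropFv φ.fv

/-- Free variables of one side (a membership context together with a formula context). -/
def ctxFv {Γ : List NType} (Θ : MemCtx Γ) (G : List (Delta0 Γ)) :
    Set ((s : NType) × Var Γ s) :=
  {v | (∃ a ∈ Θ, v ∈ a.2.1.fv ∪ a.2.2.fv) ∨ (∃ φ ∈ G, v ∈ φ.fv)}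

/-! ### NRC[Get] -/

/-- NRC extended with the `Get` operation extracting the unique element of a singleton. -/
inductive NRCG : List NType → NType → Type
  | var {Γ t} : Var Γ t → NRCG Γ t
  | unit {Γ} : NRCG Γ .unit
  | pair {Γ a b} : NRCG Γ a → NRCG Γ b → NRCG Γ (.prod a b)
  | fst {Γ a b} : NRCG Γ (.prod a b) → NRCG Γ a
  | snd {Γ a b} : NRCG Γ (.prod a b) → NRCG Γ b
  | sing {Γ t} : NRCG Γ t → NRCG Γ (.set t)
  | empty {Γ t} : NRCG Γ (.set t)
  | union {Γ t} : NRCG Γ (.set t) → NRCG Γ (.set t) → NRCG Γ (.set t)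
  | diff {Γ t} : NRCG Γ (.set t) → NRCG Γ (.set t) → NRCG Γ (.set t)
  | bigUnion {Γ a b} : NRCG (a :: Γ) (.set b) → NRCG Γ (.set a) → NRCG Γ (.set b)
  | get {Γ t} : NRCG Γ (.set t) → NRCG Γ t

/-- Default objects of each type (built from the distinguished Ur-element). -/
def Obj.dflt (α : Type) [Inhabited α] : ∀ t, Obj α t
  | .U => (default : α)
  | .unit => (() : Unit)
  | .prod a b => ((Obj.dflt α a, Obj.dflt α b) : _ × _)
  | .set t => (∅ : Set (Obj α t))

attribute [local instance] Classical.propDecidable in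
/-- Semantics of NRC[Get]: `Get` extracts the unique element of a singleton and returns
the default object otherwise. -/
noncomputable def NRCG.eval {α : Type} [Inhabited α] :
    ∀ {Γ}, Env α Γ → ∀ {t}, NRCG Γ t → Obj α t
  | _, ρ, _, .var v => ρ _ v
  | _, _, _, .unit => (() : Unit)
  | _, ρ, _, .pair a b => ((NRCG.eval ρ a, NRCG.eval ρ b) : _ × _)
  | _, ρ, _, .fst (a := a) (b := b) p => (NRCG.eval ρ p : Obj α a × Obj α b).1
  | _, ρ, _, .snd (a := a) (b := b) p => (NRCG.eval ρ p : Obj α a × Obj α b).2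
  | _, ρ, _, .sing e => ({NRCG.eval ρ e} : Set _)
  | _, _, _, .empty => (∅ : Set _)
  | _, ρ, _, .union e1 e2 => ((NRCG.eval ρ e1 : Set _) ∪ (NRCG.eval ρ e2 : Set _) : Set _)
  | _, ρ, _, .diff e1 e2 => ((NRCG.eval ρ e1 : Set _) \ (NRCG.eval ρ e2 : Set _) : Set _)
  | _, ρ, _, .bigUnion (a := a) (b := b) e2 e1 =>
      show Set (Obj α b) from
        ⋃ x ∈ (show Set (Obj α a) from NRCG.eval ρ e1),
          (show Set (Obj α b) from NRCG.eval (Env.cons x ρ) e2)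
  | _, ρ, _, .get (t := t) e =>
      if h : ∃ x : Obj α t, (show Set (Obj α t) from NRCG.eval ρ e) = {x} then h.choose
      else Obj.dflt α t

def NRCG.fv : ∀ {Γ : List NType} {t}, NRCG Γ t → Set ((s : NType) × Var Γ s)
  | _, _, .var v => {⟨_, v⟩}
  | _, _, .unit => ∅
  | _, _, .pair a b => a.fv ∪ b.fv
  | _, _, .fst p => p.fv
  | _, _, .snd p => p.fv
  | _, _, .sing e => e.fv
  | _, _, .empty => ∅
  | _, _, .union e1 e2 => e1.fv ∪ e2.fv
  | _, _, .diff e1 e2 => e1.fv ∪ e2.fv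
  | _, _, .bigUnion e2 e1 => e1.fv ∪ dropFv e2.fv
  | _, _, .get e => e.fv

/-!
Every rule of the calculus preserves semantic validity of sequents, so soundness is an
induction on derivations. Renamings and substitutions act on environments by
precomposition, and evaluation commutes with this action. A rule with a fresh variable is
justified by extending the environment with a suitable value for it; a rule whose premise
is a substitution instance of its conclusion, by checking that every environment
satisfying the conclusion's antecedents is the image of one under that substitution.
-/

section Semantics

variable {α : Type} {Γ Δ : List NType}

def Env.rename (r : Ren Γ Δ) (ρ : Env α Δ) : Env α Γ := fun t v => ρ t (r t v)

def Env.subst (σ : Subst Γ Δ) (ρ : Env α Δ) : Env α Γ := fun t v => Tm.eval ρ (σ t v)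

theorem Env.rename_wk_cons {s : NType} (x : Obj α s) (ρ : Env α Γ) :
    (Env.cons x ρ).rename Ren.wk = ρ :=
  rfl

theorem Env.rename_lift_cons {s : NType} (r : Ren Γ Δ) (x : Obj α s) (ρ : Env α Δ) :
    (Env.cons x ρ).rename r.lift = Env.cons x (ρ.rename r) := by
  funext t v; cases v <;> rfl

theorem Env.cons_zero_rename_wk {s : NType} (ρ : Env α (s :: Γ)) :
    Env.cons (ρ s .zero) (ρ.rename Ren.wk) = ρ := by
  funext t v; cases v <;> rfl

theorem Tm.eval_rename (r : Ren Γ Δ) (ρ : Env α Δ) :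
    ∀ {t} (e : Tm Γ t), Tm.eval ρ (e.rename r) = Tm.eval (ρ.rename r) e
  | _, .var _ => rfl
  | _, .unit => rfl
  | _, .pair a b => by rw [Tm.rename, Tm.eval, Tm.eval, a.eval_rename r ρ, b.eval_rename r ρ]
  | _, .fst p => by rw [Tm.rename, Tm.eval, Tm.eval, p.eval_rename r ρ]
  | _, .snd p => by rw [Tm.rename, Tm.eval, Tm.eval, p.eval_rename r ρ]

theorem Tm.eval_rename_wk {s t : NType} (x : Obj α s) (ρ : Env α Γ) (e : Tm Γ t) :
    Tm.eval (Env.cons x ρ) (e.rename Ren.wk) = Tm.eval ρ e :=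
  e.eval_rename Ren.wk _

theorem Env.subst_lift_cons {s : NType} (σ : Subst Γ Δ) (x : Obj α s) (ρ : Env α Δ) :
    (Env.cons x ρ).subst σ.lift = Env.cons x (ρ.subst σ) := by
  funext t v
  cases v with
  | zero => rfl
  | succ w => exact Tm.eval_rename_wk x ρ (σ t w)

theorem Env.subst_cons_id {s : NType} (u : Tm Γ s) (ρ : Env α Γ) :
    ρ.subst (Subst.cons u Subst.id) = Env.cons (Tm.eval ρ u) ρ := by
  funext t v; cases v <;> rfl

theorem Env.exists_subst_etaSub_eq {a b : NType} (ρ : Env α (.prod a b :: Γ)) :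
    ∃ ρ' : Env α (a :: b :: Γ), ρ'.subst etaSub = ρ := by
  refine ⟨Env.cons (ρ _ .zero).1 (Env.cons (ρ _ .zero).2 (ρ.rename Ren.wk)), ?_⟩
  conv_rhs => rw [← Env.cons_zero_rename_wk ρ]
  funext t v; cases v <;> rfl

theorem Tm.eval_subst (σ : Subst Γ Δ) (ρ : Env α Δ) :
    ∀ {t} (e : Tm Γ t), Tm.eval ρ (e.subst σ) = Tm.eval (ρ.subst σ) e
  | _, .var _ => rfl
  | _, .unit => rfl
  | _, .pair a b => by rw [Tm.subst, Tm.eval, Tm.eval, a.eval_subst σ ρ, b.eval_subst σ ρ]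
  | _, .fst p => by rw [Tm.subst, Tm.eval, Tm.eval, p.eval_subst σ ρ]
  | _, .snd p => by rw [Tm.subst, Tm.eval, Tm.eval, p.eval_subst σ ρ]

theorem Delta0.sat_rename :
    ∀ {Γ Δ : List NType} (r : Ren Γ Δ) (ρ : Env α Δ) (φ : Delta0 Γ),
      Delta0.sat ρ (φ.rename r) ↔ Delta0.sat (ρ.rename r) φ
  | _, _, r, ρ, .eqU a b | _, _, r, ρ, .neU a b => by
      simp only [Delta0.rename, Delta0.sat, Tm.eval_rename]
  | _, _, _, _, .tru | _, _, _, _, .fls => Iff.rfl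
  | _, _, r, ρ, .and φ ψ | _, _, r, ρ, .or φ ψ => by
      simp only [Delta0.rename, Delta0.sat, sat_rename r ρ φ, sat_rename r ρ ψ]
  | _, _, r, ρ, .all s φ => by
      simp only [Delta0.rename, Delta0.sat, Tm.eval_rename, sat_rename r.lift _ φ,
        Env.rename_lift_cons]
  | _, _, r, ρ, .ex s φ => by
      simp only [Delta0.rename, Delta0.sat, Tm.eval_rename, sat_rename r.lift _ φ,
        Env.rename_lift_cons]

theorem Delta0.sat_subst :
    ∀ {Γ Δ : List NType} (σ : Subst Γ Δ) (ρ : Env α Δ) (φ : Delta0 Γ),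
      Delta0.sat ρ (φ.subst σ) ↔ Delta0.sat (ρ.subst σ) φ
  | _, _, σ, ρ, .eqU a b | _, _, σ, ρ, .neU a b => by
      simp only [Delta0.subst, Delta0.sat, Tm.eval_subst]
  | _, _, _, _, .tru | _, _, _, _, .fls => Iff.rfl
  | _, _, σ, ρ, .and φ ψ | _, _, σ, ρ, .or φ ψ => by
      simp only [Delta0.subst, Delta0.sat, sat_subst σ ρ φ, sat_subst σ ρ ψ]
  | _, _, σ, ρ, .all s φ => by
      simp only [Delta0.subst, Delta0.sat, Tm.eval_subst, sat_subst σ.lift _ φ,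
        Env.subst_lift_cons]
  | _, _, σ, ρ, .ex s φ => by
      simp only [Delta0.subst, Delta0.sat, Tm.eval_subst, sat_subst σ.lift _ φ,
        Env.subst_lift_cons]

theorem MemCtx.sat_cons (ρ : Env α Γ) (a : MemAtom Γ) (Θ : MemCtx Γ) :
    MemCtx.sat ρ (a :: Θ) ↔ MemAtom.sat ρ a ∧ MemCtx.sat ρ Θ :=
  List.forall_mem_cons

theorem ctxSat_cons (ρ : Env α Γ) (φ : Delta0 Γ) (G : List (Delta0 Γ)) :
    CtxSat ρ (φ :: G) ↔ Delta0.sat ρ φ ∧ CtxSat ρ G :=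
  List.forall_mem_cons

theorem MemCtx.sat_rename (r : Ren Γ Δ) (ρ : Env α Δ) (Θ : MemCtx Γ) :
    MemCtx.sat ρ (Θ.rename r) ↔ MemCtx.sat (ρ.rename r) Θ := by
  simp only [MemCtx.sat, MemCtx.rename, List.forall_mem_map, MemAtom.sat, MemAtom.rename,
    Tm.eval_rename]
  rfl

theorem MemCtx.sat_subst (σ : Subst Γ Δ) (ρ : Env α Δ) (Θ : MemCtx Γ) :
    MemCtx.sat ρ (Θ.subst σ) ↔ MemCtx.sat (ρ.subst σ) Θ := by
  simp only [MemCtx.sat, MemCtx.subst, List.forall_mem_map, MemAtom.sat, MemAtom.subst,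
    Tm.eval_subst]
  rfl

theorem ctxSat_map_rename (r : Ren Γ Δ) (ρ : Env α Δ) (G : List (Delta0 Γ)) :
    CtxSat ρ (G.map (Delta0.rename r)) ↔ CtxSat (ρ.rename r) G := by
  simp only [CtxSat, List.forall_mem_map, Delta0.sat_rename]

theorem ctxSat_map_subst (σ : Subst Γ Δ) (ρ : Env α Δ) (G : List (Delta0 Γ)) :
    CtxSat ρ (G.map (Delta0.subst σ)) ↔ CtxSat (ρ.subst σ) G := by
  simp only [CtxSat, List.forall_mem_map, Delta0.sat_subst]

theorem RHS.sat_subst (σ : Subst Γ Δ) (ρ : Env α Δ) (ψ : RHS Γ) :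
    RHS.sat ρ (ψ.subst σ) ↔ RHS.sat (ρ.subst σ) ψ := by
  cases ψ <;> simp only [RHS.subst, RHS.sat, Tm.eval_subst]

theorem RHS.sat_rename (r : Ren Γ Δ) (ρ : Env α Δ) (ψ : RHS Γ) :
    RHS.sat ρ (ψ.rename r) ↔ RHS.sat (ρ.rename r) ψ := by
  cases ψ <;> simp only [RHS.rename, RHS.sat, Tm.eval_rename]

end Semantics

def SeqValid (Γ : List NType) (Θ : MemCtx Γ) (G : List (Delta0 Γ)) (ψ : RHS Γ) : Prop :=
  ∀ (α : Type) (ρ : Env α Γ), MemCtx.sat ρ Θ → CtxSat ρ G → RHS.sat ρ ψ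

namespace SeqValid

variable {Γ Δ : List NType} {Θ Θ' : MemCtx Γ} {G G' : List (Delta0 Γ)} {ψ : RHS Γ}

theorem of_subset (hΘ : Θ ⊆ Θ') (hG : G ⊆ G') (h : SeqValid Γ Θ G ψ) :
    SeqValid Γ Θ' G' ψ :=
  fun α ρ sΘ sG => h α ρ (fun a ha => sΘ a (hΘ ha)) (fun φ hφ => sG φ (hG hφ))

theorem mem_of_mem_ctx {T : NType} {t : Tm Γ T} {u : Tm Γ (.set T)} :
    SeqValid Γ (⟨T, (t, u)⟩ :: Θ) G (.mem t u) :=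
  fun _ _ sΘ _ => sΘ _ List.mem_cons_self

theorem eq_of_sub_of_sub {T : NType} {t u : Tm Γ (.set T)} (htu : SeqValid Γ Θ G (.sub t u))
    (hut : SeqValid Γ Θ G (.sub u t)) : SeqValid Γ Θ G (.eq t u) :=
  fun α ρ sΘ sG => Set.Subset.antisymm (htu α ρ sΘ sG) (hut α ρ sΘ sG)

theorem prod_eq {a b : NType} {t u : Tm Γ (.prod a b)}
    (h₁ : SeqValid Γ Θ G (.eq (.fst t) (.fst u)))
    (h₂ : SeqValid Γ Θ G (.eq (.snd t) (.snd u))) :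
    SeqValid Γ Θ G (.eq t u) :=
  fun α ρ sΘ sG => Prod.ext (h₁ α ρ sΘ sG) (h₂ α ρ sΘ sG)

theorem unit_eq {t u : Tm Γ .unit} : SeqValid Γ Θ G (.eq t u) :=
  fun _ _ _ _ => rfl

theorem sat_cons_of_wk {T : NType} {a : MemAtom (T :: Γ)} {G₀ : List (Delta0 (T :: Γ))}
    {ψ : RHS (T :: Γ)}
    (h : SeqValid (T :: Γ) (a :: Θ.rename Ren.wk) (G₀ ++ G.map (Delta0.rename Ren.wk)) ψ)
    {α : Type} {ρ : Env α Γ} (sΘ : MemCtx.sat ρ Θ) (sG : CtxSat ρ G) (x : Obj α T)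
    (ha : MemAtom.sat (Env.cons x ρ) a) (hG₀ : CtxSat (Env.cons x ρ) G₀) :
    RHS.sat (Env.cons x ρ) ψ := by
  refine h α _ ((MemCtx.sat_cons ..).2 ⟨ha, ?_⟩) fun φ hφ => ?_
  · rwa [MemCtx.sat_rename, Env.rename_wk_cons]
  · rcases List.mem_append.1 hφ with hφ | hφ
    · exact hG₀ φ hφ
    · exact (ctxSat_map_rename Ren.wk (Env.cons x ρ) G).2 sG φ hφ

/-- The fresh set variable is instantiated with the singleton `{t}`. -/
theorem eq_of_mem_fresh {T : NType} {t u : Tm Γ T}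
    (h : SeqValid (.set T :: Γ) (⟨T, (t.rename Ren.wk, .var .zero)⟩ :: Θ.rename Ren.wk)
      (G.map (Delta0.rename Ren.wk)) (.mem (u.rename Ren.wk) (.var .zero))) :
    SeqValid Γ Θ G (.eq t u) := fun α ρ sΘ sG => by
  let z : Obj α (.set T) := ({Tm.eval ρ t} : Set (Obj α T))
  have hu := sat_cons_of_wk (G₀ := []) h sΘ sG z ?_ (List.forall_mem_nil _)
  · rw [RHS.sat, Tm.eval_rename_wk] at hu
    exact (Set.mem_singleton_iff.1 hu).symm
  · rw [MemAtom.sat, Tm.eval_rename_wk]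
    exact Set.mem_singleton _

theorem sub_of_mem_fresh {T : NType} {t u : Tm Γ (.set T)}
    (h : SeqValid (T :: Γ) (⟨T, (.var .zero, t.rename Ren.wk)⟩ :: Θ.rename Ren.wk)
      (G.map (Delta0.rename Ren.wk)) (.mem (.var .zero) (u.rename Ren.wk))) :
    SeqValid Γ Θ G (.sub t u) := fun α ρ sΘ sG x hx => by
  have hx' := sat_cons_of_wk (G₀ := []) h sΘ sG x ?_ (List.forall_mem_nil _)
  · rwa [RHS.sat, Tm.eval_rename_wk] at hx'
  · rwa [MemAtom.sat, Tm.eval_rename_wk]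

theorem mem_of_eq {T : NType} {t u : Tm Γ T} {v : Tm Γ (.set T)}
    (h : SeqValid Γ (⟨T, (t, v)⟩ :: Θ) G (.eq t u)) :
    SeqValid Γ (⟨T, (t, v)⟩ :: Θ) G (.mem u v) := fun α ρ sΘ sG => by
  have htu : Tm.eval ρ t = Tm.eval ρ u := h α ρ sΘ sG
  rw [RHS.sat, ← htu]
  exact sΘ _ List.mem_cons_self

theorem of_fls : SeqValid Γ Θ (.fls :: G) ψ :=
  fun _ _ _ sG => (sG _ List.mem_cons_self).elim

theorem of_neU_self {t : Tm Γ .U} : SeqValid Γ Θ (.neU t t :: G) ψ :=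
  fun _ _ _ sG => (sG _ List.mem_cons_self rfl).elim

theorem and_left {φ₁ φ₂ : Delta0 Γ} (h : SeqValid Γ Θ (φ₁ :: φ₂ :: G) ψ) :
    SeqValid Γ Θ (.and φ₁ φ₂ :: G) ψ := fun α ρ sΘ sG => h α ρ sΘ <| by
  simpa only [ctxSat_cons, Delta0.sat, and_assoc] using sG

theorem or_left {φ₁ φ₂ : Delta0 Γ} (h₁ : SeqValid Γ Θ (φ₁ :: G) ψ)
    (h₂ : SeqValid Γ Θ (φ₂ :: G) ψ) : SeqValid Γ Θ (.or φ₁ φ₂ :: G) ψ := by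
  intro α ρ sΘ sG
  obtain ⟨hφ₁ | hφ₂, sG⟩ := (ctxSat_cons ..).1 sG
  · exact h₁ α ρ sΘ ((ctxSat_cons ..).2 ⟨hφ₁, sG⟩)
  · exact h₂ α ρ sΘ ((ctxSat_cons ..).2 ⟨hφ₂, sG⟩)

theorem all_left {T : NType} {w : Tm Γ T} {z : Tm Γ (.set T)} {φ : Delta0 (T :: Γ)}
    (h : SeqValid Γ (⟨T, (w, z)⟩ :: Θ) (φ.subst (Subst.cons w Subst.id) :: G) ψ) :
    SeqValid Γ (⟨T, (w, z)⟩ :: Θ) (.all z φ :: G) ψ := fun α ρ sΘ sG => by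
  obtain ⟨hall, sG⟩ := (ctxSat_cons ..).1 sG
  refine h α ρ sΘ ((ctxSat_cons ..).2 ⟨?_, sG⟩)
  rw [Delta0.sat_subst, Env.subst_cons_id]
  exact hall _ (sΘ _ List.mem_cons_self)

theorem ex_left {T : NType} {y : Tm Γ (.set T)} {φ : Delta0 (T :: Γ)}
    (h : SeqValid (T :: Γ) (⟨T, (.var .zero, y.rename Ren.wk)⟩ :: Θ.rename Ren.wk)
      (φ :: G.map (Delta0.rename Ren.wk)) (ψ.rename Ren.wk)) :
    SeqValid Γ Θ (.ex y φ :: G) ψ := fun α ρ sΘ sG => by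
  obtain ⟨⟨x, hx, hφ⟩, sG⟩ := (ctxSat_cons ..).1 sG
  have hψ := sat_cons_of_wk (G₀ := [φ]) h sΘ sG x ?_
    ((ctxSat_cons ..).2 ⟨hφ, List.forall_mem_nil _⟩)
  · rwa [RHS.sat_rename, Env.rename_wk_cons] at hψ
  · rwa [MemAtom.sat, Tm.eval_rename_wk]

theorem subst_iff {σ : Subst Γ Δ} :
    SeqValid Δ (Θ.subst σ) (G.map (Delta0.subst σ)) (ψ.subst σ) ↔
      ∀ (α : Type) (ρ : Env α Δ),
        MemCtx.sat (ρ.subst σ) Θ → CtxSat (ρ.subst σ) G → RHS.sat (ρ.subst σ) ψ := by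
  simp only [SeqValid, MemCtx.sat_subst, ctxSat_map_subst, RHS.sat_subst]

theorem sat_of_subst_eq {σ : Subst Γ Δ}
    (h : SeqValid Δ (Θ.subst σ) (G.map (Delta0.subst σ)) (ψ.subst σ)) {α : Type}
    {ρ : Env α Γ} {ρ' : Env α Δ} (hρ : ρ'.subst σ = ρ) (sΘ : MemCtx.sat ρ Θ)
    (sG : CtxSat ρ G) : RHS.sat ρ ψ := by
  subst hρ
  exact subst_iff.1 h α ρ' sΘ sG

theorem of_subst_surjective {σ : Subst Γ Δ}
    (hσ : ∀ (α : Type) (ρ : Env α Γ), ∃ ρ' : Env α Δ, ρ'.subst σ = ρ)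
    (h : SeqValid Δ (Θ.subst σ) (G.map (Delta0.subst σ)) (ψ.subst σ)) : SeqValid Γ Θ G ψ :=
  fun α ρ => (hσ α ρ).elim fun _ hρ => h.sat_of_subst_eq hρ

theorem subst_cons_congr {s : NType} {Θ : MemCtx (s :: Γ)} {G : List (Delta0 (s :: Γ))}
    {ψ : RHS (s :: Γ)} {u u' : Tm Γ s}
    (h : SeqValid Γ (Θ.subst (Subst.cons u Subst.id))
      (G.map (Delta0.subst (Subst.cons u Subst.id))) (ψ.subst (Subst.cons u Subst.id)))
    (hu : ∀ (α : Type) (ρ : Env α Γ), Tm.eval ρ u = Tm.eval ρ u') :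
    SeqValid Γ (Θ.subst (Subst.cons u' Subst.id))
      (G.map (Delta0.subst (Subst.cons u' Subst.id))) (ψ.subst (Subst.cons u' Subst.id)) := by
  refine subst_iff.2 fun α ρ => ?_
  rw [Env.subst_cons_id, ← hu, ← Env.subst_cons_id]
  exact subst_iff.1 h α ρ

theorem eqU_left {Θ : MemCtx (.U :: Γ)} {G : List (Delta0 (.U :: Γ))} {y : Tm Γ .U}
    {ψ : RHS (.U :: Γ)}
    (h : SeqValid Γ (Θ.subst (Subst.cons y Subst.id))
      (G.map (Delta0.subst (Subst.cons y Subst.id))) (ψ.subst (Subst.cons y Subst.id))) :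
    SeqValid (.U :: Γ) Θ (.eqU (.var .zero) (y.rename Ren.wk) :: G) ψ := fun α ρ sΘ sG => by
  obtain ⟨hy, sG⟩ := (ctxSat_cons ..).1 sG
  have hzero : ρ _ .zero = Tm.eval (ρ.rename Ren.wk) y := by rw [← Tm.eval_rename]; exact hy
  refine h.sat_of_subst_eq (ρ' := ρ.rename Ren.wk) ?_ sΘ sG
  rw [Env.subst_cons_id, ← hzero, Env.cons_zero_rename_wk]

end SeqValid

/-- Soundness of the restricted intuitionistic sequent calculus: if
`Θ; Γ ⊢ ψ` is derivable then, for every assignment of the free variables to objects of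
the appropriate nested relational types satisfying all membership atoms in Θ and all Δ₀
formulas in Γ, the conclusion ψ holds (⊆ as containment, = as equality, ∈ as membership). -/
theorem seq_soundness (Γ : List NType) (Θ : MemCtx Γ) (G : List (Delta0 Γ)) (ψ : RHS Γ)
    (h : SeqD Γ Θ G ψ) :
    ∀ (α : Type) (ρ : Env α Γ), MemCtx.sat ρ Θ → CtxSat ρ G → RHS.sat ρ ψ := by
  induction h with
  | perm hΘ hG _ ih => exact SeqValid.of_subset hΘ.subset hG.subset ih
  | contraction _ ih => exact SeqValid.of_subset (List.Subset.refl _) (by simp) ih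
  | memU_R => exact SeqValid.mem_of_mem_ctx
  | eqSet_R _ _ ih₁ ih₂ => exact SeqValid.eq_of_sub_of_sub ih₁ ih₂
  | eqProd_R _ _ ih₁ ih₂ => exact SeqValid.prod_eq ih₁ ih₂
  | eqUnit_R => exact SeqValid.unit_eq
  | eqU_R _ ih => exact SeqValid.eq_of_mem_fresh ih
  | sub_R _ ih => exact SeqValid.sub_of_mem_fresh ih
  | memSet_R _ ih => exact SeqValid.mem_of_eq ih
  | bot_L => exact SeqValid.of_fls
  | and_L _ ih => exact SeqValid.and_left ih
  | or_L _ _ ih₁ ih₂ => exact SeqValid.or_left ih₁ ih₂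
  | all_L _ ih => exact SeqValid.all_left ih
  | ex_L _ ih => exact SeqValid.ex_left ih
  | eq_subst _ ih => exact SeqValid.eqU_left ih
  | ne_L => exact SeqValid.of_neU_self
  | prod_beta1 _ ih => exact SeqValid.subst_cons_congr ih fun _ _ => rfl
  | prod_beta2 _ ih => exact SeqValid.subst_cons_congr ih fun _ _ => rfl
  | prod_eta _ ih =>
      exact SeqValid.of_subst_surjective (fun _ => Env.exists_subst_etaSub_eq) ih
end

section
/- The grouping transformation is implicitly Δ0-definable: for F of type Set(U × U) and G of type Set(U × Set(U)), let Σ(F,G) be the Δ0 formula stating (1) for every g ∈ G there is f ∈ F with π1(g)=π1(f), every x ∈ π2(g) satisfies ⟨π1(f),x⟩ ∈ F, and every f' ∈ F with π1(f')=π1(f) satisfies π2(f') ∈ π2(g); and (2) symmetrically, for every f ∈ F there is g ∈ G with those three properties. Then Σ(F,G) holds if and only if G = { ⟨a, {b | ⟨a,b⟩ ∈ F}⟩ | a ∈ π1(F) }, i.e., G is the grouping of F on its first component. In particular Σ implicitly defines G as a function of F. -/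
/-- The Δ₀ specification Σ(F,G) of Example 1.1/4.2: (1) every `g ∈ G` is represented by
some `f ∈ F` with the same first component, its second component consists exactly of the
elements paired with that first component in `F`; (2) symmetrically, every `f ∈ F` has a
corresponding `g ∈ G`. -/
def GroupSpec {U : Type} (F : Set (U × U)) (G : Set (U × Set U)) : Prop :=
  (∀ g ∈ G, ∃ f ∈ F, g.1 = f.1 ∧ (∀ x ∈ g.2, (f.1, x) ∈ F) ∧
    (∀ f' ∈ F, f'.1 = f.1 → f'.2 ∈ g.2)) ∧
  (∀ f ∈ F, ∃ g ∈ G, g.1 = f.1 ∧ (∀ x ∈ g.2, (f.1, x) ∈ F) ∧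
    (∀ f' ∈ F, f'.1 = f.1 → f'.2 ∈ g.2))

/-- The grouping of `F` on its first component. -/
def Grouping {U : Type} (F : Set (U × U)) : Set (U × Set U) :=
  (fun a => (a, {b | (a, b) ∈ F})) '' (Prod.fst '' F)

/-! The Δ₀ clause shared by both halves of `GroupSpec` pins `g` down to the group of `a`, so
`GroupSpec F G` says that the members of `G` are exactly the groups of first components of `F`. -/

variable {U : Type} {F : Set (U × U)} {G : Set (U × Set U)}

theorem groupClause_iff {g : U × Set U} {a : U} :
    (g.1 = a ∧ (∀ x ∈ g.2, (a, x) ∈ F) ∧ (∀ f' ∈ F, f'.1 = a → f'.2 ∈ g.2)) ↔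
      g = (a, {b | (a, b) ∈ F}) := by
  obtain ⟨c, S⟩ := g
  constructor
  · rintro ⟨rfl, hsub, hsup⟩
    exact congrArg _ (Set.ext fun b => ⟨hsub b, fun hb => hsup (c, b) hb rfl⟩)
  · rintro ⟨⟩
    exact ⟨rfl, fun _ hx => hx, fun f' hf' he => by rw [← he]; exact hf'⟩

theorem mem_grouping_iff {g : U × Set U} :
    g ∈ Grouping F ↔ ∃ f ∈ F, g = (f.1, {b | (f.1, b) ∈ F}) := by
  simp only [Grouping, Set.image_image, Set.mem_image, eq_comm]

theorem groupSpec_iff :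
    GroupSpec F G ↔ (∀ g ∈ G, g ∈ Grouping F) ∧ ∀ f ∈ F, (f.1, {b | (f.1, b) ∈ F}) ∈ G := by
  simp only [GroupSpec, groupClause_iff, mem_grouping_iff, exists_eq_right]

theorem groupSpec_iff_eq_grouping : GroupSpec F G ↔ G = Grouping F := by
  rw [groupSpec_iff, Set.ext_iff]
  constructor
  · rintro ⟨hsub, hsup⟩ g
    refine ⟨hsub g, fun hg => ?_⟩
    obtain ⟨f, hf, rfl⟩ := mem_grouping_iff.mp hg
    exact hsup f hf
  · rintro hG
    exact ⟨fun g => (hG g).mp, fun f hf => (hG _).mpr (mem_grouping_iff.mpr ⟨f, hf, rfl⟩)⟩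

/-- The grouping transformation is implicitly Δ₀-definable: Σ(F,G) holds
iff `G` is the grouping of `F` on its first component; in particular Σ implicitly defines
`G` as a function of `F`. -/
theorem grouping_implicitly_definable {U : Type} :
    (∀ (F : Set (U × U)) (G : Set (U × Set U)), GroupSpec F G ↔ G = Grouping F) ∧
    (∀ (F : Set (U × U)) (G G' : Set (U × Set U)),
      GroupSpec F G → GroupSpec F G' → G = G') :=
  ⟨fun _ _ => groupSpec_iff_eq_grouping, fun _ _ _ h h' =>
    (groupSpec_iff_eq_grouping.mp h).trans (groupSpec_iff_eq_grouping.mp h').symm⟩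
end
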